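/- arXiv:2502.11152 — 2 statements merged into one kernel-verified Lean document; each statement's English description precedes it below -/
import Mathlib

section
/- Suppose there exist ε, κ > 0 such that for all Z with dist(Z, 𝒲_G) ≤ ε one has dist(Z, 𝒲_G) ≤ κ‖∇G(Z)‖_F, where 𝒲_G = {(√λ₁W₁,...,√λ_LW_L) : (W₁,...,W_L) ∈ 𝒲_F}. Then for all W with dist(W, 𝒲_F) ≤ ε/√λ_max, one has dist(W, 𝒲_F) ≤ (κλ/λ_min)‖∇F(W)‖_F, where λ = Πλ_l, λ_min = min_l λ_l, λ_max = max_l λ_l. -/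
open Matrix

/-- Frobenius norm of a real matrix. -/
noncomputable def frob {m n : Type*} [Fintype m] [Fintype n] (A : Matrix m n ℝ) : ℝ :=
  Real.sqrt (∑ i, ∑ j, (A i j) ^ 2)

/-- Spectral (operator ℓ²→ℓ²) norm of a real matrix. -/
noncomputable def spec {m n : Type*} [Fintype m] [Fintype n] [DecidableEq n] (A : Matrix m n ℝ) : ℝ :=
  ‖LinearMap.toContinuousLinearMap (Matrix.toEuclideanLin A)‖

/-- Reindexing cast of a rectangular matrix along equalities of dimensions. -/
def mcast {a b c e : ℕ} (h1 : a = c) (h2 : b = e) (M : Matrix (Fin a) (Fin b) ℝ) :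
    Matrix (Fin c) (Fin e) ℝ :=
  Matrix.submatrix M (Fin.cast h1.symm) (Fin.cast h2.symm)

/-- `chain d W i k = W_{i+k-1} * ⋯ * W_{i+1} * W_i` (so `k` consecutive factors starting
at layer `i`; the empty product is the identity). -/
noncomputable def chain (d : ℕ → ℕ) (W : ∀ l : ℕ, Matrix (Fin (d (l + 1))) (Fin (d l)) ℝ)
    (i : ℕ) : (k : ℕ) → Matrix (Fin (d (i + k))) (Fin (d i)) ℝ
  | 0 => (1 : Matrix (Fin (d i)) (Fin (d i)) ℝ)
  | k + 1 => W (i + k) * chain d W i k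

/-- The gradient with respect to the `j`-th weight (0-based) of the loss
`‖W_{L:1} − c·Y‖_F² + ∑_l reg_l ‖W_l‖_F²`, namely
`2·W_{L:j+2}ᵀ (W_{L:1} − c Y) W_{j:1}ᵀ + 2 reg_j W_j`. -/
noncomputable def gradReg (d : ℕ → ℕ) (L : ℕ)
    (W : ∀ l : ℕ, Matrix (Fin (d (l + 1))) (Fin (d l)) ℝ)
    (reg : ℕ → ℝ) (c : ℝ) (Y : Matrix (Fin (d L)) (Fin (d 0)) ℝ)
    (j : ℕ) (hj : j < L) : Matrix (Fin (d (j + 1))) (Fin (d j)) ℝ :=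
  (2 : ℝ) • ((mcast (congrArg d (by omega : j + 1 + (L - 1 - j) = L)) rfl
      (chain d W (j + 1) (L - 1 - j)))ᵀ *
    (mcast (congrArg d (Nat.zero_add L)) rfl (chain d W 0 L) - c • Y) *
    (mcast (congrArg d (Nat.zero_add j)) rfl (chain d W 0 j))ᵀ) + (2 * reg j) • W j

/-- Frobenius norm of the full gradient of the loss above. -/
noncomputable def gradNorm (d : ℕ → ℕ) (L : ℕ)
    (W : ∀ l : ℕ, Matrix (Fin (d (l + 1))) (Fin (d l)) ℝ)
    (reg : ℕ → ℝ) (c : ℝ) (Y : Matrix (Fin (d L)) (Fin (d 0)) ℝ) : ℝ :=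
  Real.sqrt (∑ j : Fin L, (frob (gradReg d L W reg c Y j j.isLt)) ^ 2)

/-- Euclidean (Frobenius) distance from a tuple of weight matrices to a set of such tuples,
measured over the first `L` layers. -/
noncomputable def tdist (d : ℕ → ℕ) (L : ℕ)
    (W : ∀ l : ℕ, Matrix (Fin (d (l + 1))) (Fin (d l)) ℝ)
    (S : Set (∀ l : ℕ, Matrix (Fin (d (l + 1))) (Fin (d l)) ℝ)) : ℝ :=
  sInf {r : ℝ | ∃ V ∈ S, r = Real.sqrt (∑ j : Fin L, (frob (W j - V j)) ^ 2)}


/-! Scaling layer `l` by `√λ_l` turns `F` into `G`: `∇_l G` at the scaled point is `(λ/√λ_l) ∇_l F`,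
so the gradient norm grows by at most `λ/√λ_min`, while distances between scaled tuples lie
between `√λ_min` and `√λ_max` times the original ones. Chaining
`√λ_min · dist(W, 𝒲_F) ≤ dist(√λ W, 𝒲_G) ≤ κ ‖∇G(√λ W)‖ ≤ κ λ/√λ_min ‖∇F(W)‖` gives the bound. -/

abbrev Weights (d : ℕ → ℕ) : Type := ∀ l : ℕ, Matrix (Fin (d (l + 1))) (Fin (d l)) ℝ

section Tuples

variable {d : ℕ → ℕ} {L : ℕ}

noncomputable def tupleDist (d : ℕ → ℕ) (L : ℕ) (W V : Weights d) : ℝ :=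
  Real.sqrt (∑ j : Fin L, frob (W j - V j) ^ 2)

def scaleLayers (d : ℕ → ℕ) (c : ℕ → ℝ) (W : Weights d) : Weights d :=
  fun l => c l • W l

lemma frob_smul {m n : Type*} [Fintype m] [Fintype n] (r : ℝ) (A : Matrix m n ℝ) :
    frob (r • A) = |r| * frob A := by
  have h : ∑ i, ∑ j, (r • A) i j ^ 2 = r ^ 2 * ∑ i, ∑ j, A i j ^ 2 := by
    simp [mul_pow, Finset.mul_sum]
  rw [frob, frob, h, Real.sqrt_mul (sq_nonneg r), Real.sqrt_sq_eq_abs]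

lemma tupleDist_scaleLayers_sq (c : ℕ → ℝ) (W V : Weights d) :
    tupleDist d L (scaleLayers d c W) (scaleLayers d c V) ^ 2
      = ∑ j : Fin L, c j ^ 2 * frob (W j - V j) ^ 2 := by
  rw [tupleDist, Real.sq_sqrt (by positivity)]
  refine Finset.sum_congr rfl fun j _ => ?_
  rw [scaleLayers, scaleLayers, ← smul_sub, frob_smul, mul_pow, sq_abs]

lemma tupleDist_nonneg (W V : Weights d) : 0 ≤ tupleDist d L W V := Real.sqrt_nonneg _

lemma tupleDist_scaleLayers_le {c : ℕ → ℝ} {b : ℝ} (hb : 0 ≤ b) (hc : ∀ j < L, |c j| ≤ b)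
    (W V : Weights d) :
    tupleDist d L (scaleLayers d c W) (scaleLayers d c V) ≤ b * tupleDist d L W V := by
  refine (pow_le_pow_iff_left₀ (tupleDist_nonneg _ _)
    (mul_nonneg hb (tupleDist_nonneg _ _)) two_ne_zero).1 ?_
  rw [mul_pow, tupleDist_scaleLayers_sq, tupleDist, Real.sq_sqrt (by positivity), Finset.mul_sum]
  refine Finset.sum_le_sum fun j _ => mul_le_mul_of_nonneg_right ?_ (sq_nonneg _)
  rw [← sq_abs]
  exact pow_le_pow_left₀ (abs_nonneg _) (hc j j.isLt) 2

lemma le_tupleDist_scaleLayers {c : ℕ → ℝ} {a : ℝ} (ha : 0 ≤ a) (hc : ∀ j < L, a ≤ |c j|)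
    (W V : Weights d) :
    a * tupleDist d L W V ≤ tupleDist d L (scaleLayers d c W) (scaleLayers d c V) := by
  refine (pow_le_pow_iff_left₀ (mul_nonneg ha (tupleDist_nonneg _ _))
    (tupleDist_nonneg _ _) two_ne_zero).1 ?_
  rw [mul_pow, tupleDist_scaleLayers_sq, tupleDist, Real.sq_sqrt (by positivity), Finset.mul_sum]
  refine Finset.sum_le_sum fun j _ => mul_le_mul_of_nonneg_right ?_ (sq_nonneg _)
  rw [← sq_abs (c j)]
  exact pow_le_pow_left₀ ha (hc j j.isLt) 2

lemma tdist_le_tupleDist {S : Set (Weights d)} {V : Weights d} (hV : V ∈ S) (W : Weights d) :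
    tdist d L W S ≤ tupleDist d L W V :=
  csInf_le ⟨0, by rintro r ⟨V, -, rfl⟩; exact Real.sqrt_nonneg _⟩ ⟨V, hV, rfl⟩

lemma le_tdist {S : Set (Weights d)} (hS : S.Nonempty) {W : Weights d} {a : ℝ}
    (h : ∀ V ∈ S, a ≤ tupleDist d L W V) : a ≤ tdist d L W S := by
  obtain ⟨V₀, hV₀⟩ := hS
  refine le_csInf ⟨_, V₀, hV₀, rfl⟩ ?_
  rintro r ⟨V, hV, rfl⟩
  exact h V hV

lemma tdist_empty (W : Weights d) : tdist d L W ∅ = 0 := by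
  simp [tdist, Real.sInf_empty]

lemma tdist_image_scaleLayers_le {c : ℕ → ℝ} {b : ℝ} (hb : 0 < b) (hc : ∀ j < L, |c j| ≤ b)
    (S : Set (Weights d)) (W : Weights d) :
    tdist d L (scaleLayers d c W) (scaleLayers d c '' S) ≤ b * tdist d L W S := by
  rcases S.eq_empty_or_nonempty with rfl | hS
  · simp [tdist_empty]
  rw [← div_le_iff₀' hb]
  refine le_tdist hS fun V hV => ?_
  rw [div_le_iff₀' hb]
  exact (tdist_le_tupleDist (Set.mem_image_of_mem _ hV) _).trans
    (tupleDist_scaleLayers_le hb.le hc W V)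

lemma mul_tdist_le_tdist_image_scaleLayers {c : ℕ → ℝ} {a : ℝ} (ha : 0 ≤ a)
    (hc : ∀ j < L, a ≤ |c j|) (S : Set (Weights d)) (W : Weights d) :
    a * tdist d L W S ≤ tdist d L (scaleLayers d c W) (scaleLayers d c '' S) := by
  rcases S.eq_empty_or_nonempty with rfl | hS
  · simp [tdist_empty]
  refine le_tdist (hS.image _) ?_
  rintro _ ⟨V, hV, rfl⟩
  exact (mul_le_mul_of_nonneg_left (tdist_le_tupleDist hV W) ha).trans
    (le_tupleDist_scaleLayers ha hc W V)

end Tuples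

section Gradients

variable {d : ℕ → ℕ}

lemma mcast_smul {a b c e : ℕ} (h1 : a = c) (h2 : b = e) (r : ℝ)
    (M : Matrix (Fin a) (Fin b) ℝ) : mcast h1 h2 (r • M) = r • mcast h1 h2 M := rfl

lemma chain_scaleLayers (c : ℕ → ℝ) (W : Weights d) (i k : ℕ) :
    chain d (scaleLayers d c W) i k = (∏ l ∈ Finset.Ico i (i + k), c l) • chain d W i k := by
  induction k with
  | zero => simp [chain]
  | succ k ih =>
    have hprod : ∏ l ∈ Finset.Ico i (i + (k + 1)), c l
        = (∏ l ∈ Finset.Ico i (i + k), c l) * c (i + k) :=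
      Finset.prod_Ico_succ_top (Nat.le_add_right i k) c
    rw [chain, ih, chain, scaleLayers, Matrix.smul_mul, Matrix.mul_smul, smul_smul, hprod,
      mul_comm]

lemma gradReg_scaleLayers {L : ℕ} (c : ℕ → ℝ) (W : Weights d)
    (Y : Matrix (Fin (d L)) (Fin (d 0)) ℝ) (j : ℕ) (hj : j < L) (hcj : c j ≠ 0) :
    gradReg d L (scaleLayers d c W) (fun _ => (∏ l ∈ Finset.range L, c l) ^ 2)
        (∏ l ∈ Finset.range L, c l) Y j hj
      = ((∏ l ∈ Finset.range L, c l) ^ 2 / c j) • gradReg d L W (fun l => c l ^ 2) 1 Y j hj := by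
  have hsplit : ∏ l ∈ Finset.range L, c l
      = (∏ l ∈ Finset.Ico 0 j, c l) * c j * ∏ l ∈ Finset.Ico (j + 1) L, c l := by
    rw [mul_assoc, ← Finset.prod_eq_prod_Ico_succ_bot hj,
      Finset.prod_Ico_consecutive _ (Nat.zero_le j) hj.le, Finset.range_eq_Ico]
  have hP : ∏ l ∈ Finset.Ico 0 (0 + L), c l = ∏ l ∈ Finset.range L, c l := by
    rw [Nat.zero_add, Finset.range_eq_Ico]
  have htop : ∏ l ∈ Finset.Ico (j + 1) (j + 1 + (L - 1 - j)), c l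
      = ∏ l ∈ Finset.Ico (j + 1) L, c l := by
    rw [show j + 1 + (L - 1 - j) = L by omega]
  unfold gradReg
  rw [chain_scaleLayers, chain_scaleLayers, chain_scaleLayers, hP, htop]
  simp only [mcast_smul, ← smul_sub, Matrix.transpose_smul, Matrix.smul_mul, Matrix.mul_smul,
    smul_smul, smul_add, one_smul, Nat.zero_add, scaleLayers]
  congr 2
  · rw [div_mul_eq_mul_div, eq_div_iff hcj]
    linear_combination (-2 * ∏ l ∈ Finset.range L, c l) * hsplit
  · field_simp

lemma gradNorm_le_mul {L : ℕ} {W W' : Weights d}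
    {reg reg' : ℕ → ℝ} {c c' : ℝ} {Y : Matrix (Fin (d L)) (Fin (d 0)) ℝ} {K : ℝ} (hK : 0 ≤ K)
    (h : ∀ j (hj : j < L),
      frob (gradReg d L W reg c Y j hj) ≤ K * frob (gradReg d L W' reg' c' Y j hj)) :
    gradNorm d L W reg c Y ≤ K * gradNorm d L W' reg' c' Y := by
  rw [gradNorm, gradNorm, ← Real.sqrt_sq hK, ← Real.sqrt_mul (sq_nonneg _), Finset.mul_sum]
  refine Real.sqrt_le_sqrt (Finset.sum_le_sum fun j _ => ?_)
  rw [← mul_pow]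
  exact pow_le_pow_left₀ (Real.sqrt_nonneg _) (h j j.isLt) 2

lemma gradNorm_scaleLayers_sqrt_le {L : ℕ} {lam : ℕ → ℝ} (hlam : ∀ l, 0 < lam l) {m : ℝ}
    (hm : 0 < m) (hm_le : ∀ j < L, m ≤ lam j)
    (W : Weights d) (Y : Matrix (Fin (d L)) (Fin (d 0)) ℝ) :
    gradNorm d L (scaleLayers d (fun l => √(lam l)) W) (fun _ => ∏ l ∈ Finset.range L, lam l)
        (√(∏ l ∈ Finset.range L, lam l)) Y
      ≤ (∏ l ∈ Finset.range L, lam l) / √m * gradNorm d L W lam 1 Y := by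
  have hP : 0 < ∏ l ∈ Finset.range L, lam l := Finset.prod_pos fun l _ => hlam l
  have hsqrtP : ∏ l ∈ Finset.range L, √(lam l) = √(∏ l ∈ Finset.range L, lam l) :=
    (Real.sqrt_prod _ fun l _ => (hlam l).le).symm
  have hsq : (fun l => √(lam l) ^ 2) = lam := funext fun l => Real.sq_sqrt (hlam l).le
  refine gradNorm_le_mul (by positivity) fun j hj => ?_
  have hj_pos : 0 < √(lam j) := Real.sqrt_pos.2 (hlam j)
  have h := gradReg_scaleLayers (fun l => √(lam l)) W Y j hj hj_pos.ne'
  rw [hsqrtP, Real.sq_sqrt hP.le, hsq] at h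
  rw [h, frob_smul, abs_of_pos (by positivity)]
  exact mul_le_mul_of_nonneg_right (div_le_div_of_nonneg_left hP.le (Real.sqrt_pos.2 hm)
    (Real.sqrt_le_sqrt (hm_le j hj))) (Real.sqrt_nonneg _)

end Gradients

/-- if an error bound holds near the critical set `𝒲_G` of
`G(W) = ‖W_{L:1} − √λY‖² + λ∑‖W_l‖²`, where
`𝒲_G = {(√λ₁W₁,…,√λ_LW_L) : W ∈ 𝒲_F}` and `𝒲_F` is the critical set of
`F(W) = ‖W_{L:1} − Y‖² + ∑λ_l‖W_l‖²`, then for every `W` with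
`dist(W,𝒲_F) ≤ ε/√λ_max` one has `dist(W,𝒲_F) ≤ (κλ/λ_min)‖∇F(W)‖_F`. -/
theorem stmt8 (L : ℕ) (hL : 2 ≤ L) (d : ℕ → ℕ) (lam : ℕ → ℝ) (hlam : ∀ l, 0 < lam l)
    (Y : Matrix (Fin (d L)) (Fin (d 0)) ℝ)
    (lamP lamMin lamMax : ℝ)
    (hP : lamP = ∏ l ∈ Finset.range L, lam l)
    (hMin : lamMin = (Finset.range L).inf' (Finset.nonempty_range_iff.mpr (by omega)) lam)
    (hMax : lamMax = (Finset.range L).sup' (Finset.nonempty_range_iff.mpr (by omega)) lam)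
    (WF WG : Set (∀ l : ℕ, Matrix (Fin (d (l + 1))) (Fin (d l)) ℝ))
    (hWG : WG = (fun (V : ∀ l : ℕ, Matrix (Fin (d (l + 1))) (Fin (d l)) ℝ) =>
        (fun l => Real.sqrt (lam l) • V l)) '' WF)
    (ε κ : ℝ) (hκ : 0 < κ)
    (hEB : ∀ Z, tdist d L Z WG ≤ ε →
      tdist d L Z WG ≤ κ * gradNorm d L Z (fun _ => lamP) (Real.sqrt lamP) Y) :
    ∀ W, tdist d L W WF ≤ ε / Real.sqrt lamMax →
      tdist d L W WF ≤ (κ * lamP / lamMin) * gradNorm d L W lam 1 Y := by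
  intro W hW
  have hMin_le : ∀ j < L, lamMin ≤ lam j := fun j hj =>
    hMin ▸ Finset.inf'_le _ (Finset.mem_range.2 hj)
  have hle_Max : ∀ j < L, lam j ≤ lamMax := fun j hj =>
    hMax ▸ Finset.le_sup' _ (Finset.mem_range.2 hj)
  have hlamMin : 0 < lamMin := hMin ▸ (Finset.lt_inf'_iff _).2 fun l _ => hlam l
  have hsqrtMin : 0 < √lamMin := Real.sqrt_pos.2 hlamMin
  have hsqrtMax : 0 < √lamMax := Real.sqrt_pos.2 ((hlam 0).trans_le (hle_Max 0 (by omega)))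
  have habs : ∀ j, |√(lam j)| = √(lam j) := fun j => abs_of_nonneg (Real.sqrt_nonneg _)
  have hWG' : WG = scaleLayers d (fun l => √(lam l)) '' WF := hWG
  have hlower : √lamMin * tdist d L W WF ≤ tdist d L (scaleLayers d (fun l => √(lam l)) W) WG :=
    hWG' ▸ mul_tdist_le_tdist_image_scaleLayers hsqrtMin.le
      (fun j hj => (habs j).symm ▸ Real.sqrt_le_sqrt (hMin_le j hj)) WF W
  have hnear : tdist d L (scaleLayers d (fun l => √(lam l)) W) WG ≤ ε :=
    (hWG' ▸ tdist_image_scaleLayers_le hsqrtMax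
      (fun j hj => (habs j).symm ▸ Real.sqrt_le_sqrt (hle_Max j hj)) WF W).trans
      ((le_div_iff₀' hsqrtMax).1 hW)
  have hgrad := gradNorm_scaleLayers_sqrt_le hlam hlamMin hMin_le W Y
  rw [← hP] at hgrad
  have key : √lamMin * tdist d L W WF ≤ κ * (lamP / √lamMin * gradNorm d L W lam 1 Y) :=
    hlower.trans ((hEB _ hnear).trans (mul_le_mul_of_nonneg_left hgrad hκ.le))
  rw [div_mul_eq_mul_div, le_div_iff₀ hlamMin, ← Real.mul_self_sqrt hlamMin.le]
  calc tdist d L W WF * (√lamMin * √lamMin) = √lamMin * (√lamMin * tdist d L W WF) := by ring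
    _ ≤ √lamMin * (κ * (lamP / √lamMin * gradNorm d L W lam 1 Y)) :=
      mul_le_mul_of_nonneg_left key hsqrtMin.le
    _ = κ * lamP * gradNorm d L W lam 1 Y := by field_simp
end

section
/- Suppose matrices W₁,...,W_L satisfy ‖W_{k+1}ᵀW_{k+1} − W_kW_kᵀ‖_F ≤ (3√2σ*_max/(4λ))‖∇G(W)‖_F for all k, and ‖W_k‖ ≤ 3σ*_max/2 for all k. Then for all i ≤ j, ‖W_{j:i}ᵀW_{j:i} − (W_iᵀW_i)^{j−i+1}‖_F ≤ ((j−i)(j−i+1)/(2√2λ)) · (3σ*_max/2)^{2(j−i)+1} · ‖∇G(W)‖_F. -/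
open Matrix

section SpecLemmas

open scoped Matrix.Norms.L2Operator

variable {m n p : Type*} [Fintype m] [Fintype n] [Fintype p]

lemma spec_eq_norm [DecidableEq n] (A : Matrix m n ℝ) : spec A = ‖A‖ := rfl

lemma spec_nonneg [DecidableEq n] (A : Matrix m n ℝ) : 0 ≤ spec A := norm_nonneg _

lemma spec_mul_le [DecidableEq n] [DecidableEq p] (A : Matrix m n ℝ) (B : Matrix n p ℝ) :
    spec (A * B) ≤ spec A * spec B := by
  rw [spec_eq_norm, spec_eq_norm, spec_eq_norm]; exact Matrix.l2_opNorm_mul A B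

lemma spec_transpose [DecidableEq m] [DecidableEq n] (A : Matrix m n ℝ) :
    spec Aᵀ = spec A := by
  rw [spec_eq_norm, spec_eq_norm, ← Matrix.conjTranspose_eq_transpose_of_trivial,
    Matrix.l2_opNorm_conjTranspose]

lemma spec_one_le [DecidableEq n] : spec (1 : Matrix n n ℝ) ≤ 1 := by
  unfold spec
  refine ContinuousLinearMap.opNorm_le_bound _ zero_le_one ?_
  intro x
  rw [one_mul]
  simp [Matrix.toEuclideanLin_apply]

lemma spec_mulVec [DecidableEq n] (A : Matrix m n ℝ) (v : n → ℝ) :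
    ‖(WithLp.equiv 2 (m → ℝ)).symm (A *ᵥ v)‖ ≤ spec A * ‖(WithLp.equiv 2 (n → ℝ)).symm v‖ := by
  have h := (LinearMap.toContinuousLinearMap (Matrix.toEuclideanLin A)).le_opNorm
    ((WithLp.equiv 2 (n → ℝ)).symm v)
  simpa [spec, Matrix.toEuclideanLin_apply] using h

lemma spec_pow_le [DecidableEq n] (A : Matrix n n ℝ) (s : ℝ) (hA : spec A ≤ s) (k : ℕ) :
    spec (A ^ (k + 1)) ≤ s ^ (k + 1) := by
  have hs : 0 ≤ s := le_trans (spec_nonneg A) hA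
  induction k with
  | zero => simpa using hA
  | succ k ih =>
      calc spec (A ^ (k + 2)) = spec (A ^ (k + 1) * A) := by rw [pow_succ]
        _ ≤ spec (A ^ (k + 1)) * spec A := spec_mul_le _ _
        _ ≤ s ^ (k + 1) * s := by
            exact mul_le_mul ih hA (spec_nonneg A) (pow_nonneg hs _)
        _ = s ^ (k + 2) := by rw [← pow_succ]

end SpecLemmas

section FrobLemmas

attribute [local instance] Matrix.frobeniusSeminormedAddCommGroup

variable {m n p : Type*} [Fintype m] [Fintype n] [Fintype p]

lemma frob_eq_norm (A : Matrix m n ℝ) : frob A = ‖A‖ := by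
  rw [Matrix.frobenius_norm_def, frob]
  rw [Real.sqrt_eq_rpow]
  congr 1
  refine Finset.sum_congr rfl fun i _ => Finset.sum_congr rfl fun j _ => ?_
  rw [Real.rpow_two, Real.norm_eq_abs, sq_abs]

lemma frob_nonneg (A : Matrix m n ℝ) : 0 ≤ frob A := Real.sqrt_nonneg _

lemma frob_zero : frob (0 : Matrix m n ℝ) = 0 := by simp [frob]

lemma frob_transpose (A : Matrix m n ℝ) : frob Aᵀ = frob A := by
  rw [frob_eq_norm, frob_eq_norm, Matrix.frobenius_norm_transpose]

lemma frob_add_le (A B : Matrix m n ℝ) : frob (A + B) ≤ frob A + frob B := by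
  rw [frob_eq_norm, frob_eq_norm, frob_eq_norm]; exact norm_add_le A B

lemma euc_norm_sq (w : n → ℝ) :
    ‖(WithLp.equiv 2 (n → ℝ)).symm w‖ ^ 2 = ∑ i, (w i) ^ 2 := by
  rw [EuclideanSpace.norm_eq, Real.sq_sqrt (by positivity)]
  refine Finset.sum_congr rfl fun i _ => ?_
  simp [PiLp.toLp_apply, Real.norm_eq_abs, sq_abs]

lemma frob_mul_le_left [DecidableEq n] (A : Matrix m n ℝ) (B : Matrix n p ℝ) :
    frob (A * B) ≤ spec A * frob B := by
  have key : ∀ j, (∑ i, ((A * B) i j) ^ 2) ≤ spec A ^ 2 * ∑ k, (B k j) ^ 2 := by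
    intro j
    have h := spec_mulVec A (fun k => B k j)
    have h2 := mul_self_le_mul_self (norm_nonneg _) h
    have e1 : ∀ i, (A * B) i j = (A *ᵥ fun k => B k j) i := by
      intro i; simp [Matrix.mul_apply, Matrix.mulVec, dotProduct]
    calc (∑ i, ((A * B) i j) ^ 2) = ∑ i, ((A *ᵥ fun k => B k j) i) ^ 2 := by
          exact Finset.sum_congr rfl fun i _ => by rw [e1]
      _ = ‖(WithLp.equiv 2 (m → ℝ)).symm (A *ᵥ fun k => B k j)‖ ^ 2 := (euc_norm_sq _).symm
      _ ≤ (spec A * ‖(WithLp.equiv 2 (n → ℝ)).symm fun k => B k j‖) ^ 2 := by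
          rw [sq, sq]; exact h2
      _ = spec A ^ 2 * ∑ k, (B k j) ^ 2 := by
          rw [mul_pow, euc_norm_sq]
  have hsum : (∑ j : p, ∑ i, ((A * B) i j) ^ 2) ≤ spec A ^ 2 * ∑ j : p, ∑ k, (B k j) ^ 2 := by
    rw [Finset.mul_sum]
    exact Finset.sum_le_sum fun j _ => key j
  calc frob (A * B) = Real.sqrt (∑ j : p, ∑ i, ((A * B) i j) ^ 2) := by rw [frob, Finset.sum_comm]
    _ ≤ Real.sqrt (spec A ^ 2 * ∑ j : p, ∑ k, (B k j) ^ 2) := Real.sqrt_le_sqrt hsum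
    _ = spec A * frob B := by
        rw [Real.sqrt_mul (sq_nonneg _), Real.sqrt_sq (spec_nonneg A), frob, Finset.sum_comm]

lemma frob_mul_le_right [DecidableEq n] [DecidableEq p] (A : Matrix m n ℝ) (B : Matrix n p ℝ) :
    frob (A * B) ≤ frob A * spec B := by
  rw [← frob_transpose (A * B), Matrix.transpose_mul]
  calc frob (Bᵀ * Aᵀ) ≤ spec Bᵀ * frob Aᵀ := frob_mul_le_left _ _
    _ = frob A * spec B := by rw [spec_transpose, frob_transpose]; ring

end FrobLemmas


lemma frob_pow_sub_pow {n : Type*} [Fintype n] [DecidableEq n]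
    (X Y : Matrix n n ℝ) (s : ℝ) (hs : 0 ≤ s) (hX : spec X ≤ s) (hY : spec Y ≤ s) (m : ℕ) :
    frob (X ^ m - Y ^ m) ≤ (m : ℝ) * s ^ (m - 1) * frob (X - Y) := by
  induction m with
  | zero => simp [frob_zero, frob_nonneg]
  | succ k ih =>
      rcases Nat.eq_zero_or_pos k with hk | hk
      · subst hk; simp
      have hd : X ^ (k + 1) - Y ^ (k + 1) = X * (X ^ k - Y ^ k) + (X - Y) * Y ^ k := by
        rw [mul_sub, sub_mul, pow_succ', pow_succ']
        abel
      obtain ⟨j, rfl⟩ : ∃ j, k = j + 1 := ⟨k - 1, by omega⟩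
      have hYk : spec (Y ^ (j + 1)) ≤ s ^ (j + 1) := spec_pow_le Y s hY j
      calc frob (X ^ (j + 2) - Y ^ (j + 2))
          ≤ frob (X * (X ^ (j + 1) - Y ^ (j + 1))) + frob ((X - Y) * Y ^ (j + 1)) := by
            rw [hd]; exact frob_add_le _ _
        _ ≤ spec X * frob (X ^ (j + 1) - Y ^ (j + 1)) + frob (X - Y) * spec (Y ^ (j + 1)) :=
            add_le_add (frob_mul_le_left _ _) (frob_mul_le_right _ _)
        _ ≤ s * (((j + 1 : ℕ) : ℝ) * s ^ (j + 1 - 1) * frob (X - Y)) + frob (X - Y) * s ^ (j + 1) := by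
            refine add_le_add ?_ ?_
            · refine mul_le_mul hX ih (frob_nonneg _) hs
            · exact mul_le_mul_of_nonneg_left hYk (frob_nonneg _)
        _ = ((j + 2 : ℕ) : ℝ) * s ^ (j + 2 - 1) * frob (X - Y) := by push_cast; ring_nf

lemma sandwich {a b : Type*} [Fintype a] [Fintype b] [DecidableEq a] [DecidableEq b]
    (B : Matrix a b ℝ) (m : ℕ) :
    Bᵀ * (B * Bᵀ) ^ m * B = (Bᵀ * B) ^ (m + 1) := by
  induction m with
  | zero => simp
  | succ k ih =>
      rw [pow_succ, pow_succ, ← ih]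
      simp only [Matrix.mul_assoc]

lemma spec_chain_le (d : ℕ → ℕ) (W : ∀ l : ℕ, Matrix (Fin (d (l + 1))) (Fin (d l)) ℝ)
    (M : ℝ) (hM : 0 ≤ M) (hspec : ∀ k, spec (W k) ≤ M) (i n : ℕ) :
    spec (chain d W i n) ≤ M ^ n := by
  induction n with
  | zero => simpa [chain] using spec_one_le
  | succ k ih =>
      calc spec (chain d W i (k + 1)) = spec (W (i + k) * chain d W i k) := by rw [chain]
        _ ≤ spec (W (i + k)) * spec (chain d W i k) := spec_mul_le _ _
        _ ≤ M * M ^ k := mul_le_mul (hspec _) ih (spec_nonneg _) hM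
        _ = M ^ (k + 1) := by rw [pow_succ]; ring

lemma sum_shift (n m : ℕ) :
    (∑ t ∈ Finset.range (n + 1), ((m : ℝ) + t)) =
      (m : ℝ) + ∑ t ∈ Finset.range n, (((m + 1 : ℕ) : ℝ) + t) := by
  rw [Finset.sum_range_succ']
  have h : ∀ t : ℕ, ((m : ℝ) + ((t + 1 : ℕ) : ℝ)) = (((m + 1 : ℕ) : ℝ) + t) := by
    intro t; push_cast; ring
  rw [Finset.sum_congr rfl (fun t _ => h t)]
  push_cast; ring

lemma key_lemma (d : ℕ → ℕ) (W : ∀ l : ℕ, Matrix (Fin (d (l + 1))) (Fin (d l)) ℝ)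
    (M g : ℝ) (hM : 0 ≤ M) (hg : 0 ≤ g)
    (hspec : ∀ k, spec (W k) ≤ M)
    (hbal : ∀ k, frob ((W (k + 1))ᵀ * W (k + 1) - W k * (W k)ᵀ) ≤ g)
    (i : ℕ) : ∀ n m : ℕ,
    frob ((chain d W i n)ᵀ * ((W (i + n))ᵀ * W (i + n)) ^ m * chain d W i n
        - ((W i)ᵀ * W i) ^ (n + m))
      ≤ (∑ t ∈ Finset.range n, ((m : ℝ) + t)) * M ^ (2 * (n + m) - 2) * g := by
  intro n
  induction n with
  | zero =>
      intro m
      simp [chain, frob_zero]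
  | succ n ih =>
      intro m
      have goal' : frob ((W (i + n) * chain d W i n)ᵀ
            * ((W (i + n + 1))ᵀ * W (i + n + 1)) ^ m * (W (i + n) * chain d W i n)
            - ((W i)ᵀ * W i) ^ (n + 1 + m))
          ≤ (∑ t ∈ Finset.range (n + 1), ((m : ℝ) + t)) * M ^ (2 * (n + 1 + m) - 2) * g := by
        set B := W (i + n) with hB
        set D := chain d W i n with hD
        set X := (W (i + n + 1))ᵀ * W (i + n + 1) with hX
        have hBspec : spec B ≤ M := hspec _
        have hQ : spec D ≤ M ^ n := spec_chain_le d W M hM hspec i n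
        have hQT : spec Dᵀ ≤ M ^ n := by rw [spec_transpose]; exact hQ
        have hBT : spec Bᵀ ≤ M := by rw [spec_transpose]; exact hBspec
        have hXs : spec X ≤ M ^ 2 := by
          calc spec X ≤ spec (W (i + n + 1))ᵀ * spec (W (i + n + 1)) := spec_mul_le _ _
            _ ≤ M * M := mul_le_mul (by rw [spec_transpose]; exact hspec _) (hspec _)
                (spec_nonneg _) hM
            _ = M ^ 2 := (sq M).symm
        have hYs : spec (B * Bᵀ) ≤ M ^ 2 := by
          calc spec (B * Bᵀ) ≤ spec B * spec Bᵀ := spec_mul_le _ _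
            _ ≤ M * M := mul_le_mul hBspec hBT (spec_nonneg _) hM
            _ = M ^ 2 := (sq M).symm
        have hXY : frob (X - B * Bᵀ) ≤ g := hbal (i + n)
        have hpow : frob (X ^ m - (B * Bᵀ) ^ m) ≤ (m : ℝ) * (M ^ 2) ^ (m - 1) * g := by
          calc frob (X ^ m - (B * Bᵀ) ^ m)
              ≤ (m : ℝ) * (M ^ 2) ^ (m - 1) * frob (X - B * Bᵀ) :=
                frob_pow_sub_pow X (B * Bᵀ) (M ^ 2) (sq_nonneg M) hXs hYs m
            _ ≤ (m : ℝ) * (M ^ 2) ^ (m - 1) * g := by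
                refine mul_le_mul_of_nonneg_left hXY (by positivity)
        have hexp1 : n + 1 + m = n + (m + 1) := by omega
        have hdecomp : (B * D)ᵀ * X ^ m * (B * D) - ((W i)ᵀ * W i) ^ (n + 1 + m)
            = Dᵀ * (Bᵀ * (X ^ m - (B * Bᵀ) ^ m) * B) * D
              + (Dᵀ * ((Bᵀ * B) ^ (m + 1)) * D - ((W i)ᵀ * W i) ^ (n + (m + 1))) := by
          rw [hexp1, Matrix.transpose_mul, ← sandwich B m]
          simp only [Matrix.mul_assoc, Matrix.mul_sub, Matrix.sub_mul]
          abel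
        have hterm1 : frob (Dᵀ * (Bᵀ * (X ^ m - (B * Bᵀ) ^ m) * B) * D)
            ≤ M ^ n * (M * ((m : ℝ) * (M ^ 2) ^ (m - 1) * g) * M) * M ^ n := by
          have h1 : frob (Bᵀ * (X ^ m - (B * Bᵀ) ^ m) * B)
              ≤ M * ((m : ℝ) * (M ^ 2) ^ (m - 1) * g) * M := by
            calc frob (Bᵀ * (X ^ m - (B * Bᵀ) ^ m) * B)
                ≤ frob (Bᵀ * (X ^ m - (B * Bᵀ) ^ m)) * spec B := frob_mul_le_right _ _
              _ ≤ (spec Bᵀ * frob (X ^ m - (B * Bᵀ) ^ m)) * spec B :=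
                  mul_le_mul_of_nonneg_right (frob_mul_le_left _ _) (spec_nonneg _)
              _ ≤ (M * ((m : ℝ) * (M ^ 2) ^ (m - 1) * g)) * M := by
                  refine mul_le_mul ?_ hBspec (spec_nonneg _) (by positivity)
                  exact mul_le_mul hBT hpow (frob_nonneg _) hM
          calc frob (Dᵀ * (Bᵀ * (X ^ m - (B * Bᵀ) ^ m) * B) * D)
              ≤ frob (Dᵀ * (Bᵀ * (X ^ m - (B * Bᵀ) ^ m) * B)) * spec D := frob_mul_le_right _ _
            _ ≤ (spec Dᵀ * frob (Bᵀ * (X ^ m - (B * Bᵀ) ^ m) * B)) * spec D :=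
                mul_le_mul_of_nonneg_right (frob_mul_le_left _ _) (spec_nonneg _)
            _ ≤ (M ^ n * (M * ((m : ℝ) * (M ^ 2) ^ (m - 1) * g) * M)) * M ^ n := by
                refine mul_le_mul ?_ hQ (spec_nonneg _) (by positivity)
                exact mul_le_mul hQT h1 (frob_nonneg _) (by positivity)
        have hterm1' : M ^ n * (M * ((m : ℝ) * (M ^ 2) ^ (m - 1) * g) * M) * M ^ n
            ≤ (m : ℝ) * M ^ (2 * (n + 1 + m) - 2) * g := by
          rcases Nat.eq_zero_or_pos m with hm | hm
          · subst hm; simp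
          obtain ⟨j, rfl⟩ : ∃ j, m = j + 1 := ⟨m - 1, by omega⟩
          have he : 2 * (n + 1 + (j + 1)) - 2 = 2 * n + 2 * j + 2 := by omega
          have hj : (j + 1 : ℕ) - 1 = j := by omega
          rw [he, hj, ← pow_mul]
          have heq2 : M ^ n * (M * (((j + 1 : ℕ) : ℝ) * M ^ (2 * j) * g) * M) * M ^ n
              = ((j + 1 : ℕ) : ℝ) * M ^ (2 * n + 2 * j + 2) * g := by
            push_cast; ring
          rw [heq2]
        have hexp : 2 * (n + (m + 1)) - 2 = 2 * (n + 1 + m) - 2 := by omega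
        calc frob ((B * D)ᵀ * X ^ m * (B * D) - ((W i)ᵀ * W i) ^ (n + 1 + m))
            ≤ frob (Dᵀ * (Bᵀ * (X ^ m - (B * Bᵀ) ^ m) * B) * D)
              + frob (Dᵀ * ((Bᵀ * B) ^ (m + 1)) * D - ((W i)ᵀ * W i) ^ (n + (m + 1))) := by
              rw [hdecomp]; exact frob_add_le _ _
          _ ≤ (m : ℝ) * M ^ (2 * (n + 1 + m) - 2) * g
              + (∑ t ∈ Finset.range n, (((m + 1 : ℕ) : ℝ) + t)) * M ^ (2 * (n + (m + 1)) - 2) * g :=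
              add_le_add (le_trans hterm1 hterm1') (ih (m + 1))
          _ = (∑ t ∈ Finset.range (n + 1), ((m : ℝ) + t)) * M ^ (2 * (n + 1 + m) - 2) * g := by
              rw [hexp, sum_shift]; ring
      exact goal'

lemma sum_gauss (K : ℕ) : (∑ t ∈ Finset.range K, ((1 : ℝ) + t)) = (K : ℝ) * (K + 1) / 2 := by
  induction K with
  | zero => simp
  | succ k ih => rw [Finset.sum_range_succ, ih]; push_cast; ring

/-- if `‖W_{k+1}ᵀW_{k+1} − W_kW_kᵀ‖_F ≤ g` and `‖W_k‖ ≤ M` for all `k`, then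
for all `i ≤ j` (with `K = j − i`, so `W_{j:i} = chain d W i (K+1)`),
`‖W_{j:i}ᵀW_{j:i} − (W_iᵀW_i)^{j−i+1}‖_F ≤ (K(K+1)/2)·M^{2K}·g`; concretely, with
`M = 3σ*_max/2` and `g = (3√2σ*_max/(4λ))‖∇G(W)‖_F = (3√2σ*_max/(4λ))·gn`, the bound is
`(K(K+1)/(2√2λ))·(3σ*_max/2)^{2K+1}·gn`. -/
theorem stmt13 (d : ℕ → ℕ) (W : ∀ l : ℕ, Matrix (Fin (d (l + 1))) (Fin (d l)) ℝ)
    (M g : ℝ) (hM : 0 ≤ M) (hg : 0 ≤ g)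
    (hspec : ∀ k, spec (W k) ≤ M)
    (hbal : ∀ k, frob ((W (k + 1))ᵀ * W (k + 1) - W k * (W k)ᵀ) ≤ g)
    (i K : ℕ) :
    frob ((chain d W i (K + 1))ᵀ * chain d W i (K + 1) - ((W i)ᵀ * W i) ^ (K + 1))
        ≤ ((K : ℝ) * (K + 1)) / 2 * M ^ (2 * K) * g
    ∧ ∀ (σmax lam gn : ℝ), 0 < lam → 0 ≤ gn →
        M = 3 * σmax / 2 → g = 3 * Real.sqrt 2 * σmax / (4 * lam) * gn →
        frob ((chain d W i (K + 1))ᵀ * chain d W i (K + 1) - ((W i)ᵀ * W i) ^ (K + 1))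
          ≤ ((K : ℝ) * (K + 1)) / (2 * Real.sqrt 2 * lam) * (3 * σmax / 2) ^ (2 * K + 1) * gn := by
  have hmain : frob ((chain d W i (K + 1))ᵀ * chain d W i (K + 1) - ((W i)ᵀ * W i) ^ (K + 1))
      ≤ ((K : ℝ) * (K + 1)) / 2 * M ^ (2 * K) * g := by
    have h := key_lemma d W M g hM hg hspec hbal i K 1
    have hLHS : (chain d W i (K + 1))ᵀ * chain d W i (K + 1)
        = (chain d W i K)ᵀ * ((W (i + K))ᵀ * W (i + K)) ^ 1 * chain d W i K := by
      show (W (i + K) * chain d W i K)ᵀ * (W (i + K) * chain d W i K) = _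
      rw [Matrix.transpose_mul, pow_one]
      simp only [Matrix.mul_assoc]
    rw [hLHS]
    have he : 2 * (K + 1) - 2 = 2 * K := by omega
    calc frob ((chain d W i K)ᵀ * ((W (i + K))ᵀ * W (i + K)) ^ 1 * chain d W i K
          - ((W i)ᵀ * W i) ^ (K + 1))
        ≤ (∑ t ∈ Finset.range K, ((1 : ℝ) + t)) * M ^ (2 * (K + 1) - 2) * g := by
          simpa using h
      _ = ((K : ℝ) * (K + 1)) / 2 * M ^ (2 * K) * g := by rw [he, sum_gauss]
  refine ⟨hmain, ?_⟩
  intro σmax lam gn hlam hgn hMe hge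
  have hsq : (Real.sqrt 2) ^ 2 = 2 := Real.sq_sqrt (by norm_num)
  have hspos : (0 : ℝ) < Real.sqrt 2 := Real.sqrt_pos.mpr (by norm_num)
  have heq : ((K : ℝ) * (K + 1)) / 2 * M ^ (2 * K) * g
      = ((K : ℝ) * (K + 1)) / (2 * Real.sqrt 2 * lam) * (3 * σmax / 2) ^ (2 * K + 1) * gn := by
    rw [hMe, hge, pow_succ]
    field_simp
    ring_nf
    rw [hsq]
    ring
  rw [← heq]
  exact hmain
end
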